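/- Let b ∈ ℂ with |b| ≤ 1 and set ñ = 2|b|. Then every f ∈ K¹_b satisfies, for every z ∈ 𝔻 \ {0} with r = |z|, the disc inequality |z·f'(z)/f(z) − (1 + r⁴)/(1 − r⁴)| ≤ (ñ r + 6 r² + 4 ñ r³ + 6 r⁴ + ñ r⁵) / ((1 + ñ r + r²)(1 − r⁴)). -/

import Mathlib

/-!
Write `f z = z g z`. Since `p z = g z (1 - z²)` has positive real part and `p 0 = 1`, its Cayley
transform `(p - 1)/(p + 1)` is a self-map of the disc vanishing at `0`, so by Schwarz's lemma it
equals `z φ z` for a holomorphic `φ` from the disc to the closed disc, with `φ 0 = b`. Then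
`z f'/f = (1 + z²)/(1 - z²) + 2z(φ + zφ')/(1 - z²φ²)`. The first term lies on the circle of
radius `2r²/(1 - r⁴)` about `(1 + r⁴)/(1 - r⁴)`, and the Schwarz–Pick bounds
`|φ z| ≤ (r + |b|)/(1 + |b| r)` and `|φ' z| ≤ (1 - |φ z|²)/(1 - r²)` bound the second term.
-/

open Complex Real Metric Set Filter Topology ComplexConjugate

lemma one_sub_ne_zero_of_norm_lt_one {c : ℂ} (h : ‖c‖ < 1) : 1 - c ≠ 0 := by
  rw [sub_ne_zero]
  rintro rfl
  simp at h

lemma one_add_ne_zero_of_norm_lt_one {c : ℂ} (h : ‖c‖ < 1) : 1 + c ≠ 0 := by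
  simpa using one_sub_ne_zero_of_norm_lt_one (c := -c) (by simpa using h)

lemma norm_mul_lt_one {a w : ℂ} (ha : ‖a‖ ≤ 1) (hw : ‖w‖ < 1) : ‖a * w‖ < 1 := by
  rw [norm_mul]
  nlinarith [norm_nonneg a, norm_nonneg w]

lemma one_sub_sq_ne_zero {z : ℂ} (hz : ‖z‖ < 1) : 1 - z ^ 2 ≠ 0 :=
  one_sub_ne_zero_of_norm_lt_one (by rw [sq]; exact norm_mul_lt_one hz.le hz)

/-- The automorphism of the unit disc exchanging `a` and `0`. -/
noncomputable def mobius (a w : ℂ) : ℂ := (w - a) / (1 - conj a * w)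

section Mobius

variable {a w : ℂ}

lemma mobius_self (a : ℂ) : mobius a a = 0 := by simp [mobius]

lemma mobius_neg_zero (a : ℂ) : mobius (-a) 0 = a := by simp [mobius]

lemma mobius_neg_apply (a w : ℂ) : mobius (-a) w = (w + a) / (1 + conj a * w) := by
  simp [mobius, sub_eq_add_neg]

lemma sq_norm_one_sub_conj_mul_sub_sq_norm_sub (a w : ℂ) :
    ‖1 - conj a * w‖ ^ 2 - ‖w - a‖ ^ 2 = (1 - ‖a‖ ^ 2) * (1 - ‖w‖ ^ 2) := by
  simp only [Complex.sq_norm, normSq_apply, sub_re, sub_im, mul_re, mul_im, conj_re, conj_im,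
    one_re, one_im]
  ring

lemma one_sub_conj_mul_ne_zero (ha : ‖a‖ < 1) (hw : ‖w‖ ≤ 1) : 1 - conj a * w ≠ 0 :=
  one_sub_ne_zero_of_norm_lt_one (by rw [mul_comm]; exact norm_mul_lt_one hw (by simpa using ha))

lemma norm_mobius_lt_one (ha : ‖a‖ < 1) (hw : ‖w‖ < 1) : ‖mobius a w‖ < 1 := by
  have hden := one_sub_conj_mul_ne_zero ha hw.le
  rw [mobius, norm_div, div_lt_one (norm_pos_iff.2 hden)]
  refine lt_of_pow_lt_pow_left₀ 2 (norm_nonneg _) ?_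
  have := sq_norm_one_sub_conj_mul_sub_sq_norm_sub a w
  nlinarith [mul_pos (by nlinarith [norm_nonneg a] : 0 < 1 - ‖a‖ ^ 2)
    (by nlinarith [norm_nonneg w] : 0 < 1 - ‖w‖ ^ 2)]

lemma mapsTo_mobius (ha : ‖a‖ < 1) : MapsTo (mobius a) (ball 0 1) (ball 0 1) := fun w hw => by
  rw [mem_ball_zero_iff] at hw ⊢
  exact norm_mobius_lt_one ha hw

lemma hasDerivAt_mobius (h : 1 - conj a * w ≠ 0) :
    HasDerivAt (mobius a) ((1 - conj a * a) / (1 - conj a * w) ^ 2) w := by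
  have := ((hasDerivAt_id w).sub_const a).div
    (((hasDerivAt_id w).const_mul (conj a)).const_sub 1) h
  exact this.congr_deriv (by simp only [id]; ring)

lemma differentiableOn_mobius (ha : ‖a‖ < 1) : DifferentiableOn ℂ (mobius a) (ball 0 1) :=
  fun _ hw => (hasDerivAt_mobius (one_sub_conj_mul_ne_zero ha
    (mem_ball_zero_iff.1 hw).le)).differentiableAt.differentiableWithinAt

lemma mobius_neg_mobius (ha : ‖a‖ < 1) (hw : ‖w‖ < 1) : mobius (-a) (mobius a w) = w := by
  have h₁ := one_sub_conj_mul_ne_zero ha hw.le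
  have h₂ : 1 - conj a * a ≠ 0 := one_sub_conj_mul_ne_zero ha ha.le
  have hsum : mobius a w + a = w * (1 - conj a * a) / (1 - conj a * w) := by
    rw [mobius, div_add' _ _ _ h₁]; congr 1; ring
  have hden : 1 + conj a * mobius a w = (1 - conj a * a) / (1 - conj a * w) := by
    rw [mobius, mul_div_assoc', add_div' _ _ _ h₁]; congr 1; ring
  rw [mobius_neg_apply, hsum, hden, div_div_div_cancel_right₀ h₁, mul_div_cancel_right₀ _ h₂]

lemma norm_mobius_neg_le (ha : ‖a‖ < 1) (hw : ‖w‖ < 1) :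
    ‖mobius (-a) w‖ ≤ (‖w‖ + ‖a‖) / (1 + ‖a‖ * ‖w‖) := by
  have hden : 1 + conj a * w ≠ 0 := by
    simpa using one_sub_conj_mul_ne_zero (a := -a) (by simpa using ha) hw.le
  rw [mobius_neg_apply, norm_div, div_le_div_iff₀ (norm_pos_iff.2 hden) (by positivity)]
  refine le_of_pow_le_pow_left₀ two_ne_zero (by positivity) ?_
  have hid := sq_norm_one_sub_conj_mul_sub_sq_norm_sub (-a) w
  simp only [map_neg, neg_mul, sub_neg_eq_add, norm_neg] at hid
  have htri : ‖w + a‖ ^ 2 ≤ (‖w‖ + ‖a‖) ^ 2 := by gcongr; exact norm_add_le w a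
  have hK : 0 ≤ (1 - ‖a‖ ^ 2) * (1 - ‖w‖ ^ 2) := by
    apply mul_nonneg <;> nlinarith [norm_nonneg a, norm_nonneg w]
  nlinarith [mul_le_mul_of_nonneg_right htri hK]

end Mobius

lemma add_div_one_add_mul_le_of_le {α s r : ℝ} (hα₀ : 0 ≤ α) (hα₁ : α ≤ 1) (hs : 0 ≤ s)
    (hsr : s ≤ r) : (s + α) / (1 + α * s) ≤ (r + α) / (1 + α * r) := by
  rw [div_le_div_iff₀ (by positivity) (by nlinarith)]
  nlinarith [mul_le_mul_of_nonneg_left hsr (by nlinarith : 0 ≤ 1 - α ^ 2)]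

section SchwarzPick

variable {φ : ℂ → ℂ} {z : ℂ}

lemma norm_le_of_mapsTo_ball_ball (hd : DifferentiableOn ℂ φ (ball 0 1))
    (hφ : MapsTo φ (ball 0 1) (ball 0 1)) (hz : z ∈ ball 0 1) :
    ‖φ z‖ ≤ (‖z‖ + ‖φ 0‖) / (1 + ‖φ 0‖ * ‖z‖) := by
  set a := φ 0
  have ha : ‖a‖ < 1 := mem_ball_zero_iff.1 (hφ (mem_ball_self one_pos))
  have hz' : ‖z‖ < 1 := mem_ball_zero_iff.1 hz
  have hφz : ‖φ z‖ < 1 := mem_ball_zero_iff.1 (hφ hz)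
  have hmaps : MapsTo (mobius a ∘ φ) (ball 0 1) (ball 0 1) := (mapsTo_mobius ha).comp hφ
  have hschwarz : ‖mobius a (φ z)‖ ≤ ‖z‖ :=
    Complex.norm_le_norm_of_mapsTo_ball ((differentiableOn_mobius ha).comp hd hφ)
      (hmaps.mono_right ball_subset_closedBall) (mobius_self a) hz'
  have hlt : ‖mobius a (φ z)‖ < 1 := hschwarz.trans_lt hz'
  calc ‖φ z‖ = ‖mobius (-a) (mobius a (φ z))‖ := by rw [mobius_neg_mobius ha hφz]
    _ ≤ (‖mobius a (φ z)‖ + ‖a‖) / (1 + ‖a‖ * ‖mobius a (φ z)‖) := norm_mobius_neg_le ha hlt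
    _ ≤ (‖z‖ + ‖a‖) / (1 + ‖a‖ * ‖z‖) :=
      add_div_one_add_mul_le_of_le (norm_nonneg _) ha.le (norm_nonneg _) hschwarz

-- Schwarz's lemma for `mobius (φ z) ∘ φ ∘ mobius (-z)`, which fixes `0`.
lemma norm_deriv_le_of_mapsTo_ball_ball (hd : DifferentiableOn ℂ φ (ball 0 1))
    (hφ : MapsTo φ (ball 0 1) (ball 0 1)) (hz : z ∈ ball 0 1) :
    ‖deriv φ z‖ ≤ (1 - ‖φ z‖ ^ 2) / (1 - ‖z‖ ^ 2) := by
  set a := φ z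
  have ha : ‖a‖ < 1 := mem_ball_zero_iff.1 (hφ hz)
  have hz' : ‖-z‖ < 1 := by simpa using mem_ball_zero_iff.1 hz
  set G := mobius a ∘ φ ∘ mobius (-z)
  have hGd : DifferentiableOn ℂ G (ball 0 1) :=
    (differentiableOn_mobius ha).comp (hd.comp (differentiableOn_mobius hz') (mapsTo_mobius hz'))
      (hφ.comp (mapsTo_mobius hz'))
  have hG0 : G 0 = 0 := by simp [G, mobius_neg_zero, a, mobius_self]
  have hGmaps : MapsTo G (ball 0 1) (closedBall (G 0) 1) := by
    rw [hG0]
    exact ((mapsTo_mobius ha).comp (hφ.comp (mapsTo_mobius hz'))).mono_right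
      ball_subset_closedBall
  have hφ' : HasDerivAt φ (deriv φ z) (mobius (-z) 0) := by
    rw [mobius_neg_zero]
    exact (hd.differentiableAt (isOpen_ball.mem_nhds hz)).hasDerivAt
  have hmobius_a : HasDerivAt (mobius a) ((1 - conj a * a) / (1 - conj a * a) ^ 2)
      ((φ ∘ mobius (-z)) 0) := by
    rw [Function.comp_apply, mobius_neg_zero]
    exact hasDerivAt_mobius (one_sub_conj_mul_ne_zero ha ha.le)
  have hG' := hmobius_a.comp 0
    (hφ'.comp 0 (hasDerivAt_mobius (one_sub_conj_mul_ne_zero hz' (by simp))))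
  have hderiv : deriv G 0 = deriv φ z * ((1 - ‖z‖ ^ 2 : ℝ) / (1 - ‖a‖ ^ 2 : ℝ) : ℝ) := by
    have ha2 : (1 : ℂ) - (‖a‖ : ℂ) ^ 2 ≠ 0 := by
      rw [← conj_mul']; exact one_sub_conj_mul_ne_zero ha ha.le
    rw [hG'.deriv]
    simp only [map_neg, neg_mul_neg, mul_zero, sub_zero, one_pow, div_one, conj_mul']
    push_cast
    field_simp
  have hr : 0 < 1 - ‖z‖ ^ 2 := by nlinarith [norm_nonneg z, norm_neg z]
  have ht : 0 < 1 - ‖a‖ ^ 2 := by nlinarith [norm_nonneg a]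
  have hschwarz := Complex.norm_deriv_le_one_of_mapsTo_ball hGd hGmaps one_pos
  rw [hderiv, norm_mul, norm_real, Real.norm_of_nonneg (by positivity), mul_div_assoc',
    div_le_one ht] at hschwarz
  rwa [le_div_iff₀ hr]

lemma mapsTo_ball_or_eqOn_const (hd : DifferentiableOn ℂ φ (ball 0 1))
    (hφ : MapsTo φ (ball 0 1) (closedBall 0 1)) :
    MapsTo φ (ball 0 1) (ball 0 1) ∨ ∃ c : ℂ, ‖c‖ = 1 ∧ EqOn φ (Function.const ℂ c) (ball 0 1) := by
  refine or_iff_not_imp_left.2 fun hball => ?_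
  simp only [MapsTo, not_forall] at hball
  obtain ⟨x, hx, hφx⟩ := hball
  have hnorm : ‖φ x‖ = 1 :=
    le_antisymm (mem_closedBall_zero_iff.1 (hφ hx)) (by simpa using hφx)
  have hmax : IsMaxOn (norm ∘ φ) (ball 0 1) x := fun y hy => by
    simpa [hnorm] using mem_closedBall_zero_iff.1 (hφ hy)
  exact ⟨φ x, hnorm, Complex.eq_const_of_exists_max hd hx hmax⟩

lemma norm_le_of_mapsTo_ball_closedBall (hd : DifferentiableOn ℂ φ (ball 0 1))
    (hφ : MapsTo φ (ball 0 1) (closedBall 0 1)) (hz : z ∈ ball 0 1) :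
    ‖φ z‖ ≤ (‖z‖ + ‖φ 0‖) / (1 + ‖φ 0‖ * ‖z‖) := by
  rcases mapsTo_ball_or_eqOn_const hd hφ with hball | ⟨c, hc, hconst⟩
  · exact norm_le_of_mapsTo_ball_ball hd hball hz
  · simp only [hconst hz, hconst (mem_ball_self one_pos), Function.const_apply, hc]
    rw [one_mul, add_comm, div_self (by positivity)]

lemma norm_deriv_le_of_mapsTo_ball_closedBall (hd : DifferentiableOn ℂ φ (ball 0 1))
    (hφ : MapsTo φ (ball 0 1) (closedBall 0 1)) (hz : z ∈ ball 0 1) :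
    ‖deriv φ z‖ ≤ (1 - ‖φ z‖ ^ 2) / (1 - ‖z‖ ^ 2) := by
  rcases mapsTo_ball_or_eqOn_const hd hφ with hball | ⟨c, hc, hconst⟩
  · exact norm_deriv_le_of_mapsTo_ball_ball hd hball hz
  · have hderiv : deriv φ z = 0 := by
      rw [(eventuallyEq_of_mem (isOpen_ball.mem_nhds hz) hconst).deriv_eq]
      exact deriv_const z c
    rw [hderiv, hconst hz, Function.const_apply, hc]
    simp

end SchwarzPick

lemma norm_sub_one_div_add_one_lt_one {p : ℂ} (hp : 0 < p.re) : ‖(p - 1) / (p + 1)‖ < 1 := by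
  have hden : p + 1 ≠ 0 := fun h => by
    simp [eq_neg_of_add_eq_zero_left h] at hp; linarith
  rw [norm_div, div_lt_one (norm_pos_iff.2 hden)]
  refine lt_of_pow_lt_pow_left₀ 2 (norm_nonneg _) ?_
  simp only [Complex.sq_norm, normSq_apply, sub_re, sub_im, add_re, add_im, one_re, one_im]
  nlinarith

lemma exists_eq_one_add_div_one_sub_of_re_pos {p : ℂ → ℂ} (hd : DifferentiableOn ℂ p (ball 0 1))
    (hre : ∀ z ∈ ball (0 : ℂ) 1, 0 < (p z).re) (h0 : p 0 = 1) :
    ∃ φ : ℂ → ℂ, DifferentiableOn ℂ φ (ball 0 1) ∧ MapsTo φ (ball 0 1) (closedBall 0 1) ∧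
      φ 0 = deriv p 0 / 2 ∧ ∀ z ∈ ball (0 : ℂ) 1, p z = (1 + z * φ z) / (1 - z * φ z) := by
  have hden : ∀ z ∈ ball (0 : ℂ) 1, p z + 1 ≠ 0 := fun z hz h => by
    have := hre z hz
    simp [eq_neg_of_add_eq_zero_left h] at this; linarith
  set w : ℂ → ℂ := fun z => (p z - 1) / (p z + 1)
  have hwd : DifferentiableOn ℂ w (ball 0 1) := (hd.sub_const 1).div (hd.add_const 1) hden
  have hw0 : w 0 = 0 := by simp [w, h0]
  have hwmaps : MapsTo w (ball 0 1) (closedBall (w 0) 1) := fun z hz => by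
    rw [hw0, mem_closedBall_zero_iff]
    exact (norm_sub_one_div_add_one_lt_one (hre z hz)).le
  have hball : ball (0 : ℂ) 1 ∈ 𝓝 0 := isOpen_ball.mem_nhds (mem_ball_self one_pos)
  refine ⟨dslope w 0, (Complex.differentiableOn_dslope hball).2 hwd, fun z hz => ?_, ?_,
    fun z hz => ?_⟩
  · simpa using Complex.norm_dslope_le_div_of_mapsTo_ball hwd hwmaps hz
  · have hp' : HasDerivAt p (deriv p 0) 0 := (hd.differentiableAt hball).hasDerivAt
    have hw' : HasDerivAt w _ 0 :=
      (hp'.sub_const 1).div (hp'.add_const 1) (hden 0 (mem_ball_self one_pos))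
    rw [dslope_same, hw'.deriv, h0]
    ring
  · have hwz : w z = z * dslope w 0 z := by
      simpa [hw0] using (sub_smul_dslope w 0 z).symm
    have hw1 : 1 - w z ≠ 0 :=
      one_sub_ne_zero_of_norm_lt_one (norm_sub_one_div_add_one_lt_one (hre z hz))
    rw [← hwz, eq_div_iff hw1]
    simp only [w]
    field_simp [hden z hz]
    ring

lemma iteratedDeriv_two_eq_two_mul_deriv_dslope {f : ℂ → ℂ} {s : Set ℂ} {a : ℂ} (hs : IsOpen s)
    (ha : a ∈ s) (hf : DifferentiableOn ℂ f s) :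
    iteratedDeriv 2 f a = 2 * deriv (dslope f a) a := by
  set g := dslope f a
  have hg : AnalyticOnNhd ℂ g s :=
    ((Complex.differentiableOn_dslope (hs.mem_nhds ha)).2 hf).analyticOnNhd hs
  have hfg : f = fun x => f a + (x - a) * g x := by
    funext x
    rw [← smul_eq_mul, sub_smul_dslope, add_sub_cancel]
  have hderiv : deriv f =ᶠ[𝓝 a] fun x => g x + (x - a) * deriv g x := by
    filter_upwards [hs.mem_nhds ha] with x hx
    rw [hfg]
    have : HasDerivAt (fun x => f a + (x - a) * g x) _ x :=
      (((hasDerivAt_id' x).sub_const a).fun_mul (hg x hx).differentiableAt.hasDerivAt).const_add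
        (f a)
    rw [this.deriv, one_mul]
  have : HasDerivAt (fun x => g x + (x - a) * deriv g x) _ a :=
    (hg a ha).differentiableAt.hasDerivAt.add
    (((hasDerivAt_id' a).sub_const a).fun_mul (hg.deriv a ha).differentiableAt.hasDerivAt)
  rw [iteratedDeriv_succ, iteratedDeriv_one, hderiv.deriv_eq, this.deriv]
  ring

lemma exists_schurFunction_repr {f : ℂ → ℂ} (hf : AnalyticOnNhd ℂ f (ball 0 1)) (hf0 : f 0 = 0)
    (hf1 : deriv f 0 = 1)
    (hfP : ∀ z ∈ ball (0 : ℂ) 1, z ≠ 0 → 0 < (f z * (1 - z ^ 2) / z).re) :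
    ∃ φ : ℂ → ℂ, DifferentiableOn ℂ φ (ball 0 1) ∧ MapsTo φ (ball 0 1) (closedBall 0 1) ∧
      φ 0 = iteratedDeriv 2 f 0 / 4 ∧
      ∀ z ∈ ball (0 : ℂ) 1, f z = z * (1 + z * φ z) / ((1 - z * φ z) * (1 - z ^ 2)) := by
  have hfd : DifferentiableOn ℂ f (ball 0 1) := hf.differentiableOn
  have hball : ball (0 : ℂ) 1 ∈ 𝓝 0 := isOpen_ball.mem_nhds (mem_ball_self one_pos)
  set g := dslope f 0
  have hgd : DifferentiableOn ℂ g (ball 0 1) := (Complex.differentiableOn_dslope hball).2 hfd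
  have hfg : ∀ z, f z = z * g z := fun z => by
    simpa [hf0] using (sub_smul_dslope f 0 z).symm
  have hg0 : g 0 = 1 := (dslope_same f 0).trans hf1
  set p := fun z => g z * (1 - z ^ 2)
  have hpd : DifferentiableOn ℂ p (ball 0 1) := hgd.mul (by fun_prop)
  have hp0 : p 0 = 1 := by simp [p, hg0]
  have hpre : ∀ z ∈ ball (0 : ℂ) 1, 0 < (p z).re := by
    intro z hz
    rcases eq_or_ne z 0 with rfl | hz0
    · simp [hp0]
    · have hfp : f z * (1 - z ^ 2) / z = p z := by
        rw [hfg z, mul_assoc, mul_div_cancel_left₀ _ hz0]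
      exact hfp ▸ hfP z hz hz0
  have hp' : deriv p 0 = iteratedDeriv 2 f 0 / 2 := by
    have hg' : HasDerivAt g (deriv g 0) 0 := (hgd.differentiableAt hball).hasDerivAt
    have : HasDerivAt p _ 0 := hg'.mul ((hasDerivAt_pow 2 (0 : ℂ)).const_sub 1)
    rw [this.deriv, iteratedDeriv_two_eq_two_mul_deriv_dslope isOpen_ball (mem_ball_self one_pos)
      hfd]
    simp [g]
  obtain ⟨φ, hφd, hφmaps, hφ0, hpφ⟩ := exists_eq_one_add_div_one_sub_of_re_pos hpd hpre hp0
  refine ⟨φ, hφd, hφmaps, by rw [hφ0, hp']; ring, fun z hz => ?_⟩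
  have hgz : g z = (1 + z * φ z) / (1 - z * φ z) / (1 - z ^ 2) :=
    (eq_div_iff (one_sub_sq_ne_zero (mem_ball_zero_iff.1 hz))).2 (hpφ z hz)
  rw [hfg z, hgz, div_div, mul_div_assoc]

lemma mul_deriv_div_eq_of_eventuallyEq {f φ : ℂ → ℂ} {z : ℂ}
    (hf : f =ᶠ[𝓝 z] fun x => x * (1 + x * φ x) / ((1 - x * φ x) * (1 - x ^ 2)))
    (hφ : DifferentiableAt ℂ φ z) (hz0 : z ≠ 0) (hz : ‖z‖ < 1) (hφz : ‖φ z‖ ≤ 1) :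
    z * deriv f z / f z =
      (1 + z ^ 2) / (1 - z ^ 2) + 2 * z * (φ z + z * deriv φ z) / (1 - z ^ 2 * φ z ^ 2) := by
  have hzφ : ‖z * φ z‖ < 1 := by rw [mul_comm]; exact norm_mul_lt_one hφz hz
  have h₁ : 1 - z * φ z ≠ 0 := one_sub_ne_zero_of_norm_lt_one hzφ
  have h₂ : 1 + z * φ z ≠ 0 := one_add_ne_zero_of_norm_lt_one hzφ
  have h₃ : 1 - z ^ 2 ≠ 0 := one_sub_sq_ne_zero hz
  have h₄ : 1 - z ^ 2 * φ z ^ 2 ≠ 0 := by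
    rw [show 1 - z ^ 2 * φ z ^ 2 = (1 - z * φ z) * (1 + z * φ z) by ring]
    exact mul_ne_zero h₁ h₂
  have hzφ' : HasDerivAt (fun x => x * φ x) (φ z + z * deriv φ z) z := by
    simpa using (hasDerivAt_id' z).fun_mul hφ.hasDerivAt
  have hF : HasDerivAt (fun x => x * (1 + x * φ x) / ((1 - x * φ x) * (1 - x ^ 2))) _ z :=
    ((hasDerivAt_id' z).fun_mul (hzφ'.const_add 1)).fun_div
      ((hzφ'.const_sub 1).fun_mul ((hasDerivAt_pow 2 z).const_sub 1)) (mul_ne_zero h₁ h₃)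
  rw [hf.deriv_eq, hF.deriv, hf.eq_of_nhds]
  field_simp
  ring

-- `‖z‖ ^ 4 = z ^ 2 * conj z ^ 2`, so the numerator of the difference is `2 z ^ 2 conj (1 - z ^ 2)`.
lemma norm_one_add_sq_div_one_sub_sq_sub {z : ℂ} (hz : ‖z‖ < 1) :
    ‖(1 + z ^ 2) / (1 - z ^ 2) - (((1 + ‖z‖ ^ 4) / (1 - ‖z‖ ^ 4) : ℝ) : ℂ)‖ =
      2 * ‖z‖ ^ 2 / (1 - ‖z‖ ^ 4) := by
  have hr : 0 < 1 - ‖z‖ ^ 4 := by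
    have := pow_lt_one₀ (norm_nonneg z) hz (n := 4) (by norm_num); linarith
  have hr' : (1 : ℂ) - (‖z‖ : ℂ) ^ 4 ≠ 0 := by exact_mod_cast hr.ne'
  have hz2 := one_sub_sq_ne_zero hz
  have hdiff : (1 + z ^ 2) / (1 - z ^ 2) - (((1 + ‖z‖ ^ 4) / (1 - ‖z‖ ^ 4) : ℝ) : ℂ) =
      2 * z ^ 2 * conj (1 - z ^ 2) / ((1 - z ^ 2) * ((1 - ‖z‖ ^ 4 : ℝ) : ℂ)) := by
    have h4 : (‖z‖ : ℂ) ^ 4 = z ^ 2 * conj z ^ 2 := by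
      rw [show 4 = 2 * 2 from rfl, pow_mul, ← mul_conj', mul_pow]
    push_cast
    rw [div_sub_div _ _ hz2 hr', map_sub, map_one, map_pow, h4]
    congr 1
    ring
  rw [hdiff, norm_div, norm_mul, norm_mul, norm_mul, norm_conj, norm_real,
    Real.norm_of_nonneg hr.le, norm_pow, RCLike.norm_ofNat]
  field_simp [norm_ne_zero_iff.2 hz2]

lemma norm_two_mul_div_one_sub_sq_mul_sq_le {z u u' : ℂ} (hz : ‖z‖ < 1) (hu : ‖u‖ ≤ 1) :
    ‖2 * z * (u + z * u') / (1 - z ^ 2 * u ^ 2)‖ ≤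
      2 * ‖z‖ * (‖u‖ + ‖z‖ * ‖u'‖) / (1 - ‖z‖ ^ 2 * ‖u‖ ^ 2) := by
  have hzu : ‖z‖ * ‖u‖ < 1 := by nlinarith [norm_nonneg z, norm_nonneg u]
  have hpos : 0 < 1 - ‖z‖ ^ 2 * ‖u‖ ^ 2 := by nlinarith [mul_nonneg (norm_nonneg z) (norm_nonneg u)]
  rw [norm_div]
  gcongr
  · rw [norm_mul, norm_mul, RCLike.norm_ofNat]
    gcongr
    exact (norm_add_le _ _).trans_eq (by rw [norm_mul])
  · calc 1 - ‖z‖ ^ 2 * ‖u‖ ^ 2 = ‖(1 : ℂ)‖ - ‖z ^ 2 * u ^ 2‖ := by simp [norm_pow]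
      _ ≤ ‖1 - z ^ 2 * u ^ 2‖ := norm_sub_norm_le _ _

lemma radius_bound_of_schwarzPick {r β t U : ℝ} (hr0 : 0 ≤ r) (hr1 : r < 1) (hβ0 : 0 ≤ β)
    (ht0 : 0 ≤ t) (ht1 : t ≤ 1) (ht : t ≤ (r + β) / (1 + β * r))
    (hU : U ≤ (1 - t ^ 2) / (1 - r ^ 2)) :
    2 * r ^ 2 / (1 - r ^ 4) + 2 * r * (t + r * U) / (1 - r ^ 2 * t ^ 2) ≤
      (2 * β * r + 6 * r ^ 2 + 4 * (2 * β) * r ^ 3 + 6 * r ^ 4 + 2 * β * r ^ 5) /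
        ((1 + 2 * β * r + r ^ 2) * (1 - r ^ 4)) := by
  have hr2 : 0 < 1 - r ^ 2 := by nlinarith
  have hr4 : 0 < 1 - r ^ 4 := by nlinarith
  have hrt : 0 < 1 - r ^ 2 * t ^ 2 := by
    nlinarith [mul_le_of_le_one_right (sq_nonneg r) (pow_le_one₀ (n := 2) ht0 ht1)]
  rw [le_div_iff₀ (by positivity)] at ht
  rw [le_div_iff₀ hr2] at hU
  have hU_step : 2 * r * (t + r * U) / (1 - r ^ 2 * t ^ 2) ≤
      2 * r * (r + t) / ((1 - r ^ 2) * (1 + r * t)) := by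
    rw [div_le_div_iff₀ hrt (by positivity)]
    nlinarith [mul_le_mul_of_nonneg_left hU (by positivity : 0 ≤ 2 * r ^ 2 * (1 + r * t)),
      mul_nonneg hr0 ht0]
  have ht_step : 2 * r * (r + t) / ((1 - r ^ 2) * (1 + r * t)) ≤
      2 * r * (β + 2 * r + β * r ^ 2) / ((1 - r ^ 2) * (1 + 2 * β * r + r ^ 2)) := by
    rw [div_le_div_iff₀ (by positivity) (by positivity)]
    nlinarith [mul_le_mul_of_nonneg_left ht (by positivity : 0 ≤ 2 * r * (1 - r ^ 2)),
      mul_nonneg (mul_nonneg hr0 hr0) (sub_nonneg.2 ht)]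
  have hsum : 2 * r ^ 2 / (1 - r ^ 4) +
        2 * r * (β + 2 * r + β * r ^ 2) / ((1 - r ^ 2) * (1 + 2 * β * r + r ^ 2)) =
      (2 * β * r + 6 * r ^ 2 + 4 * (2 * β) * r ^ 3 + 6 * r ^ 4 + 2 * β * r ^ 5) /
        ((1 + 2 * β * r + r ^ 2) * (1 - r ^ 4)) := by
    field_simp
    ring
  linarith

lemma norm_sub_le_of_mapsTo_closedBall {φ : ℂ → ℂ} {z : ℂ} (hd : DifferentiableOn ℂ φ (ball 0 1))
    (hφ : MapsTo φ (ball 0 1) (closedBall 0 1)) (hz : z ∈ ball 0 1) :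
    ‖(1 + z ^ 2) / (1 - z ^ 2) + 2 * z * (φ z + z * deriv φ z) / (1 - z ^ 2 * φ z ^ 2) -
        (((1 + ‖z‖ ^ 4) / (1 - ‖z‖ ^ 4) : ℝ) : ℂ)‖ ≤
      (2 * ‖φ 0‖ * ‖z‖ + 6 * ‖z‖ ^ 2 + 4 * (2 * ‖φ 0‖) * ‖z‖ ^ 3 + 6 * ‖z‖ ^ 4 +
          2 * ‖φ 0‖ * ‖z‖ ^ 5) / ((1 + 2 * ‖φ 0‖ * ‖z‖ + ‖z‖ ^ 2) * (1 - ‖z‖ ^ 4)) := by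
  have hz' : ‖z‖ < 1 := mem_ball_zero_iff.1 hz
  have hφz : ‖φ z‖ ≤ 1 := mem_closedBall_zero_iff.1 (hφ hz)
  calc _ ≤ ‖(1 + z ^ 2) / (1 - z ^ 2) - (((1 + ‖z‖ ^ 4) / (1 - ‖z‖ ^ 4) : ℝ) : ℂ)‖ +
        ‖2 * z * (φ z + z * deriv φ z) / (1 - z ^ 2 * φ z ^ 2)‖ := by
        rw [add_sub_right_comm]; exact norm_add_le _ _
    _ ≤ 2 * ‖z‖ ^ 2 / (1 - ‖z‖ ^ 4) +
        2 * ‖z‖ * (‖φ z‖ + ‖z‖ * ‖deriv φ z‖) / (1 - ‖z‖ ^ 2 * ‖φ z‖ ^ 2) := by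
        rw [norm_one_add_sq_div_one_sub_sq_sub hz']
        gcongr
        exact norm_two_mul_div_one_sub_sq_mul_sq_le hz' hφz
    _ ≤ _ := radius_bound_of_schwarzPick (norm_nonneg z) hz' (norm_nonneg _) (norm_nonneg _) hφz
        (norm_le_of_mapsTo_ball_closedBall hd hφ hz)
        (norm_deriv_le_of_mapsTo_ball_closedBall hd hφ hz)

theorem stmt_6_general (b : ℂ)
    (n : ℝ) (hn : n = 2 * ‖b‖)
    (f : ℂ → ℂ) (hf : AnalyticOnNhd ℂ f (Metric.ball (0:ℂ) 1))
    (hf0 : f 0 = 0) (hf1 : deriv f 0 = 1)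
    (hf2 : iteratedDeriv 2 f 0 / 2 = 2 * b)
    (hfP : ∀ z ∈ Metric.ball (0:ℂ) 1, z ≠ 0 → 0 < (f z * (1 - z ^ 2) / z).re) :
    ∀ z ∈ Metric.ball (0:ℂ) 1, z ≠ 0 →
      ‖z * deriv f z / f z -
          (((1 + (‖z‖) ^ 4) / (1 - (‖z‖) ^ 4) : ℝ) : ℂ)‖ ≤
        (n * ‖z‖ + 6 * (‖z‖) ^ 2 + 4 * n * (‖z‖) ^ 3 +
            6 * (‖z‖) ^ 4 + n * (‖z‖) ^ 5) /
          ((1 + n * ‖z‖ + (‖z‖) ^ 2) * (1 - (‖z‖) ^ 4)) := by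
  intro z hz hz0
  obtain ⟨φ, hφd, hφmaps, hφ0, hfφ⟩ := exists_schurFunction_repr hf hf0 hf1 hfP
  have hφb : φ 0 = b := by rw [hφ0]; linear_combination hf2 / 2
  have hnhds : ball (0 : ℂ) 1 ∈ 𝓝 z := isOpen_ball.mem_nhds hz
  rw [mul_deriv_div_eq_of_eventuallyEq (eventuallyEq_of_mem hnhds hfφ)
    (hφd.differentiableAt hnhds) hz0 (mem_ball_zero_iff.1 hz)
    (mem_closedBall_zero_iff.1 (hφmaps hz)), hn, ← hφb]
  exact norm_sub_le_of_mapsTo_closedBall hφd hφmaps hz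

theorem stmt_6 (b : ℂ) (hb : ‖b‖ ≤ 1)
    (n : ℝ) (hn : n = 2 * ‖b‖)
    (f : ℂ → ℂ) (hf : AnalyticOnNhd ℂ f (Metric.ball (0:ℂ) 1))
    (hf0 : f 0 = 0) (hf1 : deriv f 0 = 1)
    (hf2 : iteratedDeriv 2 f 0 / 2 = 2 * b)
    (hfP : ∀ z ∈ Metric.ball (0:ℂ) 1, z ≠ 0 → 0 < (f z * (1 - z ^ 2) / z).re) :
    ∀ z ∈ Metric.ball (0:ℂ) 1, z ≠ 0 →
      ‖z * deriv f z / f z -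
          (((1 + (‖z‖) ^ 4) / (1 - (‖z‖) ^ 4) : ℝ) : ℂ)‖ ≤
        (n * ‖z‖ + 6 * (‖z‖) ^ 2 + 4 * n * (‖z‖) ^ 3 +
            6 * (‖z‖) ^ 4 + n * (‖z‖) ^ 5) /
          ((1 + n * ‖z‖ + (‖z‖) ^ 2) * (1 - (‖z‖) ^ 4)) :=
  stmt_6_general b n hn f hf hf0 hf1 hf2 hfP
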